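/- arXiv:math/0408341 — 2 statements merged into one kernel-verified Lean document; each statement's English description precedes it below -/
import Mathlib

section
/- Let X be a smooth projective curve over F_q, P an F_q-rational point, and F and G divisors on X. Suppose each of the integers α, α+1, ..., α+t is an F-gap at P and each of β−t, ..., β−1, β is a G-gap at P. Set A := F + (α + t)P, B := G + (β − t − 1)P, and Z := (t + 1)P. Then Z is effective, ℓ(A) = ℓ(A − Z), and ℓ(B) = ℓ(B + Z); consequently A + B = F + G + (α + β − 1)P and the asymmetric floor bound specializes to the Kirfel–Pellikaan bound. -/
/-!  Framework: an abstract smooth projective curve over a finite field `Fq`,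
presented through the data relevant to geometric Goppa codes: points, function
field with valuations, Riemann–Roch spaces, genus, rational differentials with
their divisors and residues, floors of divisors, and the Riemann–Roch theorem.
Divisors are finitely supported `ℤ`-valued functions on points. -/

/-- The degree of a divisor. -/
def divDeg {σ : Type*} (D : σ →₀ ℤ) : ℤ := D.sum fun _ n => n

/-- An abstract smooth projective curve over the field `Fq`. -/
structure Curve (Fq : Type*) [Field Fq] where
  /-- the (closed, rational) points of the curve -/
  Point : Type
  /-- the function field -/
  K : Type
  [fieldK : Field K]
  [algebraK : Algebra Fq K]
  /-- the genus -/
  genus : ℕ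
  /-- the valuation of a rational function at a point -/
  v : Point → K → ℤ
  v_mul : ∀ (P : Point) (f g : K), f ≠ 0 → g ≠ 0 → v P (f * g) = v P f + v P g
  /-- the Riemann–Roch space `L(A)` of a divisor `A` -/
  L : (Point →₀ ℤ) → Submodule Fq K
  mem_L : ∀ (A : Point →₀ ℤ) (f : K), f ∈ L A ↔ f = 0 ∨ ∀ P : Point, 0 ≤ A P + v P f
  L_mono : ∀ {A B : Point →₀ ℤ}, A ≤ B → L A ≤ L B
  /-- the floor `⌊A⌋` of a divisor `A` with `ℓ(A) > 0`: the unique divisor of minimal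
  degree with the same Riemann–Roch space -/
  floor : (Point →₀ ℤ) → (Point →₀ ℤ)
  floor_le : ∀ A : Point →₀ ℤ, 0 < Module.finrank Fq (L A) → floor A ≤ A
  L_floor : ∀ A : Point →₀ ℤ, 0 < Module.finrank Fq (L A) → L (floor A) = L A
  floor_min : ∀ A B : Point →₀ ℤ, 0 < Module.finrank Fq (L A) → L B = L A →
      divDeg (floor A) ≤ divDeg B
  /-- the rational differentials of the curve -/
  Diff : Type
  [addCommGroupDiff : AddCommGroup Diff]
  /-- the divisor of a (nonzero) rational differential; canonical divisors are
  exactly the divisors of nonzero differentials -/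
  divDiff : Diff → (Point →₀ ℤ)
  /-- the residue of a rational differential at a point -/
  res : Point → Diff → Fq
  exists_diff_ne_zero : ∃ η : Diff, η ≠ 0
  /-- a canonical divisor has degree `2g - 2` -/
  deg_divDiff : ∀ η : Diff, η ≠ 0 → divDeg (divDiff η) = 2 * (genus : ℤ) - 2
  /-- the Riemann–Roch theorem -/
  riemannRoch : ∀ η : Diff, η ≠ 0 → ∀ A : Point →₀ ℤ,
      (Module.finrank Fq (L A) : ℤ)
        = divDeg A + 1 - (genus : ℤ) + (Module.finrank Fq (L (divDiff η - A)) : ℤ)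

attribute [instance] Curve.fieldK Curve.algebraK Curve.addCommGroupDiff

namespace Curve

variable {Fq : Type*} [Field Fq] (C : Curve Fq)

/-- `ℓ(A)`, the dimension over `Fq` of the Riemann–Roch space `L(A)`. -/
noncomputable def ell (A : C.Point →₀ ℤ) : ℕ := Module.finrank Fq (C.L A)

/-- The space `Ω(A)` of rational differentials with `(η) ≥ A`, together with `0`. -/
def Omega (A : C.Point →₀ ℤ) : Set C.Diff := {η | η = 0 ∨ A ≤ C.divDiff η}

/-- The divisor `P 0 + ⋯ + P (n-1)` attached to a tuple of points. -/
noncomputable def divOfPoints {n : ℕ} (P : Fin n → C.Point) : C.Point →₀ ℤ :=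
  ∑ i, Finsupp.single (P i) 1

/-- The residue Goppa code `C_Ω(D, G)`, where `D = P 0 + ⋯ + P (n-1)`. -/
def code {n : ℕ} (P : Fin n → C.Point) (G : C.Point →₀ ℤ) : Set (Fin n → Fq) :=
  {c | ∃ η ∈ C.Omega (G - C.divOfPoints P), ∀ i, c i = C.res (P i) η}

/-- `a` is an `A`-gap at the point `P`, i.e. `L(A + aP) = L(A + (a-1)P)`. -/
def IsGap (A : C.Point →₀ ℤ) (P : C.Point) (a : ℤ) : Prop :=
  C.L (A + Finsupp.single P a) = C.L (A + Finsupp.single P (a - 1))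

end Curve

/-- The Hamming weight of a word. -/
noncomputable def wt {Fq : Type*} [Zero Fq] {n : ℕ} (c : Fin n → Fq) : ℕ :=
  Nat.card {i // c i ≠ 0}

/-- The minimum distance (minimum weight of a nonzero codeword) of a code. -/
noncomputable def minDist {Fq : Type*} [Zero Fq] {n : ℕ} (S : Set (Fin n → Fq)) : ℕ :=
  sInf {w | ∃ c ∈ S, c ≠ 0 ∧ wt c = w}

lemma gap_chain {Fq : Type*} [Field Fq] (C : Curve Fq) (D : C.Point →₀ ℤ)
    (P : C.Point) (a : ℤ) :
    ∀ n : ℕ, (∀ j : ℤ, a ≤ j → j ≤ a + n → C.IsGap D P j) →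
      C.L (D + Finsupp.single P (a + n)) = C.L (D + Finsupp.single P (a - 1)) := by
  intro n
  induction n with
  | zero =>
    intro h
    have := h a le_rfl (by simp)
    simpa [Curve.IsGap] using this
  | succ n ih =>
    intro h
    have h1 := h (a + (n + 1)) (by linarith) (by push_cast; linarith)
    rw [Curve.IsGap] at h1
    have h2 : C.L (D + Finsupp.single P (a + n)) = C.L (D + Finsupp.single P (a - 1)) :=
      ih fun j hj hj' => h j hj (by push_cast; linarith)
    have e1 : a + ((n : ℤ) + 1) - 1 = a + n := by ring
    rw [e1] at h1
    push_cast
    rw [h1, h2]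

/-- Suppose each of `α, α+1, …, α+t` is an `F`-gap at the rational point `P₀` and each
of `β-t, …, β-1, β` is a `G`-gap at `P₀`.  Setting `A = F + (α+t)P₀`,
`B = G + (β-t-1)P₀` and `Z = (t+1)P₀`, the divisor `Z` is effective,
`ℓ(A) = ℓ(A - Z)`, `ℓ(B) = ℓ(B + Z)`, and `A + B = F + G + (α+β-1)P₀`; i.e. the
asymmetric floor bound specializes to the Kirfel–Pellikaan bound. -/
theorem gaps_satisfy_AF_hypotheses {Fq : Type*} [Field Fq] [Fintype Fq]
    (C : Curve Fq) (P₀ : C.Point) (F G : C.Point →₀ ℤ) (α β : ℤ) (t : ℕ)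
    (hF : ∀ j : ℤ, α ≤ j → j ≤ α + t → C.IsGap F P₀ j)
    (hG : ∀ j : ℤ, β - t ≤ j → j ≤ β → C.IsGap G P₀ j)
    (A B Z : C.Point →₀ ℤ)
    (hA : A = F + Finsupp.single P₀ (α + t))
    (hB : B = G + Finsupp.single P₀ (β - t - 1))
    (hZ : Z = Finsupp.single P₀ ((t : ℤ) + 1)) :
    0 ≤ Z ∧ C.ell A = C.ell (A - Z) ∧ C.ell B = C.ell (B + Z) ∧
      A + B = F + G + Finsupp.single P₀ (α + β - 1) := by
  refine ⟨?_, ?_, ?_, ?_⟩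
  · rw [hZ]
    intro p
    simp only [Finsupp.coe_zero, Pi.zero_apply]
    rcases eq_or_ne P₀ p with rfl | hp
    · rw [Finsupp.single_eq_same]; positivity
    · rw [Finsupp.single_eq_of_ne' hp]
  · have hchain := gap_chain C F P₀ α t hF
    have e1 : A - Z = F + Finsupp.single P₀ (α - 1) := by
      rw [hA, hZ]; ext p; simp [Finsupp.single_apply]; ring
    have e2 : A = F + Finsupp.single P₀ (α + t) := hA
    rw [Curve.ell, Curve.ell, e1, e2, hchain]
  · have hchain := gap_chain C G P₀ (β - t) t ?_
    · have e1 : B + Z = G + Finsupp.single P₀ (β - t + t) := by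
        rw [hB, hZ]; ext p; simp [Finsupp.single_apply]; ring
      have e2 : B = G + Finsupp.single P₀ (β - t - 1) := hB
      rw [Curve.ell, Curve.ell, e1, e2, hchain]
    · intro j hj hj'
      exact hG j hj (by linarith)
  · rw [hA, hB]; ext p; simp [Finsupp.single_apply]; ring
end

section
/- Let X be a smooth projective curve of genus g over F_q with canonical divisor W. Let A, B, Z, D', E be divisors such that Z, D', and E are effective, the supports of A, B, and Z are disjoint from the support of D', W = A + B + E − D', ℓ(A) = ℓ(A − Z), and ℓ(B) = ℓ(B + Z). Then deg(E) ≥ deg(Z). -/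
/-! Since `ℓ(A - Z) = ℓ(A)` forces `L(A - Z) = L(A)`, and `Z` vanishes on the support of
`D'`, also `L(A - Z - D') = L(A - D')`. Riemann–Roch turns `ℓ(B) = ℓ(B + Z)` into
`ℓ(W - B) - ℓ(W - B - Z) = deg Z`, where `W - B = (A - D') + E`. Adding the effective divisor
`E` raises `ℓ` by at most `deg E`, while `ℓ(W - B - Z) ≥ ℓ(A - Z - D') = ℓ(A - D')`; hence
`deg Z ≤ ℓ(A - D') + deg E - ℓ(A - D') = deg E`. -/

lemma divDeg_add {σ : Type*} (D E : σ →₀ ℤ) :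
    divDeg (D + E) = divDeg D + divDeg E :=
  Finsupp.sum_add_index' (fun _ => rfl) (fun _ _ _ => rfl)

lemma divDeg_single {σ : Type*} (P : σ) (n : ℤ) :
    divDeg (Finsupp.single P n) = n :=
  Finsupp.sum_single_index rfl

namespace Curve

variable {Fq : Type*} [Field Fq] (C : Curve Fq)

lemma riemannRoch_ell {W : C.Point →₀ ℤ} (hW : ∃ η : C.Diff, η ≠ 0 ∧ C.divDiff η = W)
    (D : C.Point →₀ ℤ) :
    (C.ell D : ℤ) = divDeg D + 1 - C.genus + C.ell (W - D) := by
  obtain ⟨η, hη, rfl⟩ := hW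
  exact C.riemannRoch η hη D

lemma finiteDimensional_L [Nonempty C.Point] (A : C.Point →₀ ℤ) :
    FiniteDimensional Fq (C.L A) := by
  by_contra hA
  obtain ⟨P⟩ := ‹Nonempty C.Point›
  obtain ⟨η, hη⟩ := C.exists_diff_ne_zero
  set m : ℤ := ((C.genus + 1 - divDeg A : ℤ).toNat : ℤ)
  have hm : (C.genus : ℤ) + 1 - divDeg A ≤ m := Int.self_le_toNat _
  -- `L(A)` sits inside `L(A + mP)`, whose `ℓ` Riemann–Roch bounds below by
  -- `deg A + m + 1 - g ≥ 2`, whereas an infinite-dimensional space has `finrank` `0`.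
  have hle : A ≤ A + Finsupp.single P m :=
    le_add_of_nonneg_right (Finsupp.single_nonneg.2 (Int.natCast_nonneg _))
  have hzero : Module.finrank Fq (C.L (A + Finsupp.single P m)) = 0 :=
    Module.finrank_of_infinite_dimensional fun hfin =>
      hA (Submodule.finiteDimensional_of_le (C.L_mono hle))
  have hrr := C.riemannRoch η hη (A + Finsupp.single P m)
  rw [hzero, divDeg_add, divDeg_single] at hrr
  omega

variable {C}

lemma ell_mono [Nonempty C.Point] {A B : C.Point →₀ ℤ} (h : A ≤ B) : C.ell A ≤ C.ell B :=
  haveI := C.finiteDimensional_L B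
  Submodule.finrank_mono (C.L_mono h)

lemma L_sub_eq_of_ell_eq [Nonempty C.Point] {A Z : C.Point →₀ ℤ} (hZ : 0 ≤ Z)
    (h : C.ell A = C.ell (A - Z)) : C.L (A - Z) = C.L A :=
  haveI := C.finiteDimensional_L A
  Submodule.eq_of_le_of_finrank_le (C.L_mono (sub_le_self A hZ)) h.le

lemma L_sub_le_of_L_eq {A₁ A₂ D : C.Point →₀ ℤ} (hD : 0 ≤ D) (hL : C.L A₁ = C.L A₂)
    (hagree : ∀ p, D p ≠ 0 → A₁ p = A₂ p) : C.L (A₁ - D) ≤ C.L (A₂ - D) := by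
  intro f hf
  have hf₂ : f ∈ C.L A₂ := hL ▸ C.L_mono (sub_le_self A₁ hD) hf
  rcases (C.mem_L _ f).1 hf with rfl | h₁
  · exact zero_mem _
  rcases (C.mem_L _ f).1 hf₂ with rfl | h₂
  · exact zero_mem _
  refine (C.mem_L _ f).2 (Or.inr fun p => ?_)
  by_cases hp : D p = 0
  · simpa [hp] using h₂ p
  · simpa [hagree p hp] using h₁ p

lemma L_sub_eq_of_L_eq {A₁ A₂ D : C.Point →₀ ℤ} (hD : 0 ≤ D) (hL : C.L A₁ = C.L A₂)
    (hagree : ∀ p, D p ≠ 0 → A₁ p = A₂ p) : C.L (A₁ - D) = C.L (A₂ - D) :=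
  le_antisymm (L_sub_le_of_L_eq hD hL hagree)
    (L_sub_le_of_L_eq hD hL.symm fun p hp => (hagree p hp).symm)

lemma ell_add_le [Nonempty C.Point] (D : C.Point →₀ ℤ) {E : C.Point →₀ ℤ} (hE : 0 ≤ E) :
    (C.ell (D + E) : ℤ) ≤ C.ell D + divDeg E := by
  obtain ⟨η, hη⟩ := C.exists_diff_ne_zero
  have hW : ∃ ω : C.Diff, ω ≠ 0 ∧ C.divDiff ω = C.divDiff η := ⟨η, hη, rfl⟩
  have hmono : C.ell (C.divDiff η - (D + E)) ≤ C.ell (C.divDiff η - D) :=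
    ell_mono (by simpa [sub_add_eq_sub_sub] using sub_le_self (C.divDiff η - D) hE)
  have hDE := C.riemannRoch_ell hW (D + E)
  have hD := C.riemannRoch_ell hW D
  rw [divDeg_add] at hDE
  omega

lemma ell_canonical_sub_eq {W : C.Point →₀ ℤ} (hW : ∃ η : C.Diff, η ≠ 0 ∧ C.divDiff η = W)
    {B Z : C.Point →₀ ℤ} (h : C.ell B = C.ell (B + Z)) :
    (C.ell (W - B) : ℤ) = C.ell (W - B - Z) + divDeg Z := by
  have hB := C.riemannRoch_ell hW B
  have hBZ := C.riemannRoch_ell hW (B + Z)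
  rw [divDeg_add, ← sub_sub, ← h] at hBZ
  omega

end Curve

theorem deg_E_ge_deg_Z_general {Fq : Type*} [Field Fq]
    (C : Curve Fq) (W : C.Point →₀ ℤ)
    (hW : ∃ η : C.Diff, η ≠ 0 ∧ C.divDiff η = W)
    (A B Z D' E : C.Point →₀ ℤ)
    (hZ : 0 ≤ Z) (hD' : 0 ≤ D') (hE : 0 ≤ E)
    (hZD : ∀ p : C.Point, D' p ≠ 0 → Z p = 0)
    (hWeq : W = A + B + E - D')
    (hA : C.ell A = C.ell (A - Z))
    (hB : C.ell B = C.ell (B + Z)) :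
    divDeg Z ≤ divDeg E := by
  rcases isEmpty_or_nonempty C.Point with hempty | hne
  · rw [Subsingleton.elim Z E]
  have hLsub : C.L (A - Z - D') = C.L (A - D') :=
    Curve.L_sub_eq_of_L_eq hD' (Curve.L_sub_eq_of_ell_eq hZ hA) fun p hp => by simp [hZD p hp]
  have hWB : W - B = A - D' + E := by rw [hWeq]; abel
  have hkey := Curve.ell_canonical_sub_eq hW hB
  rw [hWB] at hkey
  have hadd := Curve.ell_add_le (A - D') hE
  have hmono : C.ell (A - D') ≤ C.ell (A - D' + E - Z) := by
    rw [Curve.ell, ← hLsub, sub_right_comm]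
    exact Curve.ell_mono (sub_le_sub_right (le_add_of_nonneg_right hE) Z)
  omega

/-- Let `W` be a canonical divisor on a smooth projective curve of genus `g` over
`F_q`, and let `A`, `B`, `Z`, `D'`, `E` be divisors such that `Z`, `D'` and `E` are
effective, the supports of `A`, `B` and `Z` are disjoint from the support of `D'`,
`W = A + B + E - D'`, `ℓ(A) = ℓ(A - Z)`, and `ℓ(B) = ℓ(B + Z)`.
Then `deg E ≥ deg Z`. -/
theorem deg_E_ge_deg_Z {Fq : Type*} [Field Fq] [Fintype Fq]
    (C : Curve Fq) (W : C.Point →₀ ℤ)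
    (hW : ∃ η : C.Diff, η ≠ 0 ∧ C.divDiff η = W)
    (A B Z D' E : C.Point →₀ ℤ)
    (hZ : 0 ≤ Z) (hD' : 0 ≤ D') (hE : 0 ≤ E)
    (hAD : ∀ p : C.Point, D' p ≠ 0 → A p = 0)
    (hBD : ∀ p : C.Point, D' p ≠ 0 → B p = 0)
    (hZD : ∀ p : C.Point, D' p ≠ 0 → Z p = 0)
    (hWeq : W = A + B + E - D')
    (hA : C.ell A = C.ell (A - Z))
    (hB : C.ell B = C.ell (B + Z)) :
    divDeg Z ≤ divDeg E :=
  deg_E_ge_deg_Z_general C W hW A B Z D' E hZ hD' hE hZD hWeq hA hB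
end
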